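/- Let Φ(a₁,a₂,a₃) = ⟨a₁, a₂ × a₃⟩ and let f : (ℝ³)³ → ℝ⁵ collect the five Casimir functions f(a₁,a₂,a₃) = (⟨a₁,a₂⟩, ⟨a₂,a₃⟩, ⟨a₃,a₁⟩, ‖a₁‖²−‖a₂‖², ‖a₂‖²−‖a₃‖²). For every η with Φ(η) < 0 there exist q, r ≥ 0 and O ∈ SO(3) such that σ_O maps N_η = {a : f(a) = f(η), Φ(a) < 0} bijectively onto N_{q,r} = {a : ⟨aᵢ,aⱼ⟩ = 0 (i ≠ j), ‖a₁‖²−‖a₂‖² = q, ‖a₂‖²−‖a₃‖² = r, Φ(a) < 0}. Moreover, for every η with Φ(η) > 0 there exist q, r ≥ 0 and O′ ∈ O(3) with det(O′) = −1 such that σ_{O′} maps {a : f(a) = f(η), Φ(a) > 0} bijectively onto N_{q,r}. -/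

import Mathlib

open scoped RealInnerProductSpace

noncomputable section

/-- `ℝ³` with the standard (Euclidean) inner product. -/
abbrev E3 : Type := EuclideanSpace ℝ (Fin 3)

/-- The cross product on `ℝ³`. -/
def cross (u v : E3) : E3 :=
  (WithLp.equiv 2 (Fin 3 → ℝ)).symm
    (crossProduct ((WithLp.equiv 2 (Fin 3 → ℝ)) u) ((WithLp.equiv 2 (Fin 3 → ℝ)) v))

/-- `Φ(a₁,a₂,a₃) = ⟨a₁, a₂ × a₃⟩`. -/
def Phi (a : E3 × E3 × E3) : ℝ := ⟪a.1, cross a.2.1 a.2.2⟫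

/-- The five Casimir functions collected into a map `(ℝ³)³ → ℝ⁵`. -/
def casimir (a : E3 × E3 × E3) : Fin 5 → ℝ :=
  ![⟪a.1, a.2.1⟫, ⟪a.2.1, a.2.2⟫, ⟪a.2.2, a.1⟫,
    ‖a.1‖ ^ 2 - ‖a.2.1‖ ^ 2, ‖a.2.1‖ ^ 2 - ‖a.2.2‖ ^ 2]

/-- The vector field `V₀(a) = (a₂×a₃, a₃×a₁, a₁×a₂)`. -/
def V0 (a : E3 × E3 × E3) : E3 × E3 × E3 :=
  (cross a.2.1 a.2.2, cross a.2.2 a.1, cross a.1 a.2.1)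

/-- The vector field `V₁(a) = (0, a₂×a₁, a₃×a₁)`. -/
def V1 (a : E3 × E3 × E3) : E3 × E3 × E3 :=
  (0, cross a.2.1 a.1, cross a.2.2 a.1)

/-- The vector field `V₂(a) = (a₁×a₂, 0, a₃×a₂)`. -/
def V2 (a : E3 × E3 × E3) : E3 × E3 × E3 :=
  (cross a.1 a.2.1, 0, cross a.2.2 a.2.1)

/-- The vector field `V₃(a) = (a₁×a₃, a₂×a₃, 0)`. -/
def V3 (a : E3 × E3 × E3) : E3 × E3 × E3 :=
  (cross a.1 a.2.2, cross a.2.1 a.2.2, 0)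


/-- The triple `(a₁,a₂,a₃)` as a vector indexed by `Fin 3`. -/
def tre (a : E3 × E3 × E3) : Fin 3 → E3 := ![a.1, a.2.1, a.2.2]

/-- Right multiplication by a matrix: `(σ_O(a))_j = Σᵢ Oᵢⱼ aᵢ`. -/
def sigmaO (O : Matrix (Fin 3) (Fin 3) ℝ) (a : E3 × E3 × E3) : E3 × E3 × E3 :=
  (∑ i, O i 0 • tre a i, ∑ i, O i 1 • tre a i, ∑ i, O i 2 • tre a i)

/-- The normal-form leaf `N_{q,r}`. -/
def Nqr (q r : ℝ) : Set (E3 × E3 × E3) :=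
  {a | ⟪a.1, a.2.1⟫ = 0 ∧ ⟪a.2.1, a.2.2⟫ = 0 ∧ ⟪a.2.2, a.1⟫ = 0 ∧
    ‖a.1‖ ^ 2 - ‖a.2.1‖ ^ 2 = q ∧ ‖a.2.1‖ ^ 2 - ‖a.2.2‖ ^ 2 = r ∧ Phi a < 0}


namespace LeafAux
open Matrix

def Mrow (a : E3 × E3 × E3) : Matrix (Fin 3) (Fin 3) ℝ := fun i j => tre a i j

def Gram (a : E3 × E3 × E3) : Matrix (Fin 3) (Fin 3) ℝ := Mrow a * (Mrow a)ᵀ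

lemma mrow_inj {a b : E3 × E3 × E3} (h : Mrow a = Mrow b) : a = b := by
  have e : ∀ i, tre a i = tre b i := fun i => PiLp.ext fun j => congrFun (congrFun h i) j
  have e0 := e 0; have e1 := e 1; have e2 := e 2
  simp only [tre, Matrix.cons_val_zero, Matrix.cons_val_one, Matrix.head_cons] at e0 e1 e2
  exact Prod.ext e0 (Prod.ext e1 e2)

lemma gram_symm (a : E3 × E3 × E3) (i j : Fin 3) : Gram a j i = Gram a i j := by
  have : (Gram a)ᵀ = Gram a := by
    simp [Gram, Matrix.transpose_mul, Matrix.mul_assoc]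
  exact congrFun (congrFun this i) j

lemma inner_tre (a : E3 × E3 × E3) (i j : Fin 3) : ⟪tre a i, tre a j⟫ = Gram a i j := by
  simp [Gram, Matrix.mul_apply, Mrow, Matrix.transpose_apply, PiLp.inner_apply,
    RCLike.inner_apply, starRingEnd_apply]
  exact Finset.sum_congr rfl fun _ _ => mul_comm _ _

lemma phi_eq (a : E3 × E3 × E3) : Phi a = (Mrow a).det := by
  simp [Phi, cross, Mrow, tre, PiLp.inner_apply, RCLike.inner_apply, starRingEnd_apply,
    Matrix.det_fin_three, crossProduct, Fin.sum_univ_three]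
  ring

lemma mrow_sigmaO (O : Matrix (Fin 3) (Fin 3) ℝ) (a : E3 × E3 × E3) :
    Mrow (sigmaO O a) = Oᵀ * Mrow a := by
  ext j k
  fin_cases j <;>
    simp [Mrow, sigmaO, tre, Matrix.mul_apply, Fin.sum_univ_three, Finset.sum_apply,
      Matrix.transpose_apply, PiLp.smul_apply, smul_eq_mul]

lemma gram_sigmaO (O : Matrix (Fin 3) (Fin 3) ℝ) (a : E3 × E3 × E3) :
    Gram (sigmaO O a) = Oᵀ * Gram a * O := by
  rw [Gram, mrow_sigmaO, Matrix.transpose_mul, Matrix.transpose_transpose, Gram]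
  simp only [Matrix.mul_assoc]

lemma phi_sigmaO (O : Matrix (Fin 3) (Fin 3) ℝ) (a : E3 × E3 × E3) :
    Phi (sigmaO O a) = O.det * Phi a := by
  rw [phi_eq, phi_eq, mrow_sigmaO, Matrix.det_mul, Matrix.det_transpose]

lemma sigmaO_sigmaO (O P : Matrix (Fin 3) (Fin 3) ℝ) (a : E3 × E3 × E3) :
    sigmaO O (sigmaO P a) = sigmaO (P * O) a := by
  apply mrow_inj
  rw [mrow_sigmaO, mrow_sigmaO, mrow_sigmaO, Matrix.transpose_mul, Matrix.mul_assoc]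

lemma sigmaO_one (a : E3 × E3 × E3) : sigmaO 1 a = a := by
  apply mrow_inj
  rw [mrow_sigmaO, Matrix.transpose_one, Matrix.one_mul]

lemma inner12 (a : E3 × E3 × E3) : ⟪a.1, a.2.1⟫ = Gram a 0 1 := by
  simpa [tre] using inner_tre a 0 1
lemma inner23 (a : E3 × E3 × E3) : ⟪a.2.1, a.2.2⟫ = Gram a 1 2 := by
  simpa [tre] using inner_tre a 1 2
lemma inner31 (a : E3 × E3 × E3) : ⟪a.2.2, a.1⟫ = Gram a 2 0 := by
  simpa [tre] using inner_tre a 2 0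
lemma norm1 (a : E3 × E3 × E3) : ‖a.1‖ ^ 2 = Gram a 0 0 := by
  rw [← real_inner_self_eq_norm_sq]; simpa [tre] using inner_tre a 0 0
lemma norm2 (a : E3 × E3 × E3) : ‖a.2.1‖ ^ 2 = Gram a 1 1 := by
  rw [← real_inner_self_eq_norm_sq]; simpa [tre] using inner_tre a 1 1
lemma norm3 (a : E3 × E3 × E3) : ‖a.2.2‖ ^ 2 = Gram a 2 2 := by
  rw [← real_inner_self_eq_norm_sq]; simpa [tre] using inner_tre a 2 2

lemma casimir_gram (a : E3 × E3 × E3) :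
    casimir a = ![Gram a 0 1, Gram a 1 2, Gram a 2 0,
      Gram a 0 0 - Gram a 1 1, Gram a 1 1 - Gram a 2 2] := by
  rw [casimir, inner12, inner23, inner31, norm1, norm2, norm3]

lemma casimir_eq_iff (a η : E3 × E3 × E3) :
    casimir a = casimir η ↔ ∃ t : ℝ, Gram a = Gram η + t • (1 : Matrix (Fin 3) (Fin 3) ℝ) := by
  rw [casimir_gram a, casimir_gram η]
  constructor
  · intro h
    have h0 := congrFun h 0
    have h1 := congrFun h 1
    have h2 := congrFun h 2
    have h3 := congrFun h 3
    have h4 := congrFun h 4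
    simp only [Matrix.cons_val_zero, Matrix.cons_val_one, Matrix.head_cons,
      Matrix.cons_val_two, Matrix.tail_cons, Matrix.cons_val_three, Matrix.cons_val_four,
      Matrix.cons_val_fin_one, Matrix.head_fin_const] at h0 h1 h2 h3 h4
    refine ⟨Gram a 2 2 - Gram η 2 2, ?_⟩
    ext i j
    simp only [Matrix.add_apply, Matrix.smul_apply, Matrix.one_apply, smul_eq_mul]
    fin_cases i <;> fin_cases j <;>
      simp_all [gram_symm a 0 1, gram_symm a 1 2, gram_symm a 2 0,
        gram_symm η 0 1, gram_symm η 1 2, gram_symm η 2 0] <;> linarith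
  · rintro ⟨t, h⟩
    have he : ∀ i j, Gram a i j = Gram η i j + t * (1 : Matrix (Fin 3) (Fin 3) ℝ) i j :=
      fun i j => by rw [h]; simp
    funext i
    fin_cases i <;>
      simp [he 0 1, he 1 2, he 2 0, he 0 0, he 1 1, he 2 2, Matrix.one_apply]

lemma mem_Nqr_iff (b : E3 × E3 × E3) (q r : ℝ) :
    b ∈ Nqr q r ↔ (Gram b 0 1 = 0 ∧ Gram b 1 2 = 0 ∧ Gram b 2 0 = 0 ∧
      Gram b 0 0 - Gram b 1 1 = q ∧ Gram b 1 1 - Gram b 2 2 = r ∧ Phi b < 0) := by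
  rw [Nqr, Set.mem_setOf_eq, inner12, inner23, inner31, norm1, norm2, norm3]

def permMat (π : Equiv.Perm (Fin 3)) : Matrix (Fin 3) (Fin 3) ℝ :=
  fun i j => if i = π j then 1 else 0

lemma permMat_T_mul (π : Equiv.Perm (Fin 3)) (H : Matrix (Fin 3) (Fin 3) ℝ) :
    (permMat π)ᵀ * H = fun j k => H (π j) k := by
  ext j k
  simp [Matrix.mul_apply, permMat, Matrix.transpose_apply, ite_mul, one_mul, zero_mul]

lemma mul_permMat (π : Equiv.Perm (Fin 3)) (H : Matrix (Fin 3) (Fin 3) ℝ) :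
    H * permMat π = fun i k => H i (π k) := by
  ext i k
  simp [Matrix.mul_apply, permMat, mul_ite, mul_one, mul_zero]

lemma permMat_conj_diag (π : Equiv.Perm (Fin 3)) (μ : Fin 3 → ℝ) :
    (permMat π)ᵀ * Matrix.diagonal μ * permMat π = Matrix.diagonal (μ ∘ π) := by
  rw [Matrix.mul_assoc, mul_permMat]
  erw [permMat_T_mul]
  ext j k
  simp [Matrix.diagonal_apply, π.injective.eq_iff]

lemma permMat_mem (π : Equiv.Perm (Fin 3)) : permMat π ∈ Matrix.orthogonalGroup (Fin 3) ℝ := by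
  rw [Matrix.mem_orthogonalGroup_iff, mul_eq_one_comm]
  rw [permMat_T_mul]
  ext j k
  simp [permMat, Matrix.one_apply, π.injective.eq_iff]

def R3 : Matrix (Fin 3) (Fin 3) ℝ := Matrix.diagonal ![1, 1, -1]

lemma R3_mem : R3 ∈ Matrix.orthogonalGroup (Fin 3) ℝ := by
  rw [Matrix.mem_orthogonalGroup_iff, R3, Matrix.diagonal_transpose,
    Matrix.diagonal_mul_diagonal]
  ext i j
  fin_cases i <;> fin_cases j <;> simp [Matrix.diagonal_apply]

lemma R3_det : R3.det = -1 := by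
  simp [R3, Matrix.det_diagonal, Fin.prod_univ_three]

lemma R3_conj_diag (d : Fin 3 → ℝ) :
    R3ᵀ * Matrix.diagonal d * R3 = Matrix.diagonal d := by
  rw [R3, Matrix.diagonal_transpose, Matrix.diagonal_mul_diagonal, Matrix.diagonal_mul_diagonal]
  have : (fun i => ![1, 1, -1] i * d i * ![(1:ℝ), 1, -1] i) = d := by
    funext i; fin_cases i <;> norm_num
  rw [this]

lemma det_pm {O : Matrix (Fin 3) (Fin 3) ℝ} (hO : O ∈ Matrix.orthogonalGroup (Fin 3) ℝ) :
    O.det = 1 ∨ O.det = -1 := by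
  rw [Matrix.mem_orthogonalGroup_iff] at hO
  have := congrArg Matrix.det hO
  rw [Matrix.det_mul, Matrix.det_transpose, Matrix.det_one] at this
  exact mul_self_eq_one_iff.mp this

lemma orth_transpose_facts {O : Matrix (Fin 3) (Fin 3) ℝ}
    (hO : O ∈ Matrix.orthogonalGroup (Fin 3) ℝ) : Oᵀ * O = 1 ∧ O * Oᵀ = 1 := by
  rw [Matrix.mem_orthogonalGroup_iff] at hO
  exact ⟨mul_eq_one_comm.mp hO, hO⟩

lemma exists_diagonalizer (G : Matrix (Fin 3) (Fin 3) ℝ) (hG : G.IsSymm) (ε : ℝ)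
    (hε : ε = 1 ∨ ε = -1) :
    ∃ O ∈ Matrix.orthogonalGroup (Fin 3) ℝ, O.det = ε ∧ ∃ d : Fin 3 → ℝ,
      Oᵀ * G * O = Matrix.diagonal d ∧ d 1 ≤ d 0 ∧ d 2 ≤ d 1 := by
  have hH : G.IsHermitian := by
    rw [Matrix.IsHermitian, Matrix.conjTranspose_eq_transpose_of_trivial]; exact hG
  set U : Matrix (Fin 3) (Fin 3) ℝ := (hH.eigenvectorUnitary : Matrix (Fin 3) (Fin 3) ℝ) with hUdef
  have hU : U ∈ Matrix.orthogonalGroup (Fin 3) ℝ := SetLike.coe_mem _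
  obtain ⟨hU1, hU2⟩ := orth_transpose_facts hU
  set μ : Fin 3 → ℝ := hH.eigenvalues with hμ
  have spec : G = U * Matrix.diagonal μ * Uᵀ := by
    have h := hH.spectral_theorem
    rw [Unitary.conjStarAlgAut_apply, Matrix.star_eq_conjTranspose,
      Matrix.conjTranspose_eq_transpose_of_trivial] at h
    exact h
  have key : Uᵀ * G * U = Matrix.diagonal μ := by
    rw [spec]
    calc Uᵀ * (U * Matrix.diagonal μ * Uᵀ) * U
        = (Uᵀ * U) * Matrix.diagonal μ * (Uᵀ * U) := by
          simp only [Matrix.mul_assoc]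
      _ = Matrix.diagonal μ := by rw [hU1, Matrix.one_mul, Matrix.mul_one]
  set p : Equiv.Perm (Fin 3) := (Fin.revPerm).trans (Tuple.sort μ) with hp
  set d : Fin 3 → ℝ := μ ∘ p with hd
  have hmono := Tuple.monotone_sort μ
  have hd10 : d 1 ≤ d 0 := by
    have : (μ ∘ ⇑(Tuple.sort μ)) 1 ≤ (μ ∘ ⇑(Tuple.sort μ)) 2 := hmono (by decide)
    simpa [hd, hp, Equiv.trans_apply, show Fin.revPerm (0:Fin 3) = 2 from rfl,
      show Fin.revPerm (1:Fin 3) = 1 from rfl] using this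
  have hd21 : d 2 ≤ d 1 := by
    have : (μ ∘ ⇑(Tuple.sort μ)) 0 ≤ (μ ∘ ⇑(Tuple.sort μ)) 1 := hmono (by decide)
    simpa [hd, hp, Equiv.trans_apply, show Fin.revPerm (2:Fin 3) = 0 from rfl,
      show Fin.revPerm (1:Fin 3) = 1 from rfl] using this
  set O₁ : Matrix (Fin 3) (Fin 3) ℝ := U * permMat p with hO₁
  have hO₁mem : O₁ ∈ Matrix.orthogonalGroup (Fin 3) ℝ := mul_mem hU (permMat_mem p)
  have hconj₁ : O₁ᵀ * G * O₁ = Matrix.diagonal d := by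
    rw [hO₁, Matrix.transpose_mul]
    calc (permMat p)ᵀ * Uᵀ * G * (U * permMat p)
        = (permMat p)ᵀ * (Uᵀ * G * U) * permMat p := by simp only [Matrix.mul_assoc]
      _ = Matrix.diagonal d := by rw [key, permMat_conj_diag]
  rcases det_pm hO₁mem with h1 | h1
  · rcases hε with rfl | rfl
    · exact ⟨O₁, hO₁mem, h1, d, hconj₁, hd10, hd21⟩
    · refine ⟨O₁ * R3, mul_mem hO₁mem R3_mem, ?_, d, ?_, hd10, hd21⟩
      · rw [Matrix.det_mul, h1, R3_det]; ring
      · rw [Matrix.transpose_mul]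
        calc R3ᵀ * O₁ᵀ * G * (O₁ * R3) = R3ᵀ * (O₁ᵀ * G * O₁) * R3 := by
              simp only [Matrix.mul_assoc]
          _ = Matrix.diagonal d := by rw [hconj₁, R3_conj_diag]
  · rcases hε with rfl | rfl
    · refine ⟨O₁ * R3, mul_mem hO₁mem R3_mem, ?_, d, ?_, hd10, hd21⟩
      · rw [Matrix.det_mul, h1, R3_det]; ring
      · rw [Matrix.transpose_mul]
        calc R3ᵀ * O₁ᵀ * G * (O₁ * R3) = R3ᵀ * (O₁ᵀ * G * O₁) * R3 := by
              simp only [Matrix.mul_assoc]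
          _ = Matrix.diagonal d := by rw [hconj₁, R3_conj_diag]
    · exact ⟨O₁, hO₁mem, h1, d, hconj₁, hd10, hd21⟩

lemma gram_isSymm (a : E3 × E3 × E3) : (Gram a).IsSymm := by
  ext i j
  exact gram_symm a i j

lemma bijOn_key (η : E3 × E3 × E3) (O : Matrix (Fin 3) (Fin 3) ℝ)
    (hO : O ∈ Matrix.orthogonalGroup (Fin 3) ℝ) (d : Fin 3 → ℝ)
    (hdiag : Oᵀ * Gram η * O = Matrix.diagonal d)
    (P : ℝ → Prop) (hP : ∀ x, P x ↔ O.det * x < 0) :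
    Set.BijOn (sigmaO O) {a : E3 × E3 × E3 | casimir a = casimir η ∧ P (Phi a)}
      (Nqr (d 0 - d 1) (d 1 - d 2)) := by
  obtain ⟨hO1, hO2⟩ := orth_transpose_facts hO
  have hdet2 : O.det * O.det = 1 := by
    have := congrArg Matrix.det hO1
    rwa [Matrix.det_mul, Matrix.det_transpose, Matrix.det_one] at this
  have hinv₁ : ∀ a, sigmaO Oᵀ (sigmaO O a) = a := fun a => by
    rw [sigmaO_sigmaO, hO2, sigmaO_one]
  have hinv₂ : ∀ b, sigmaO O (sigmaO Oᵀ b) = b := fun b => by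
    rw [sigmaO_sigmaO, hO1, sigmaO_one]
  have hGη : Gram η = O * Matrix.diagonal d * Oᵀ := by
    have := congrArg (fun M => O * M * Oᵀ) hdiag
    rw [← this]
    symm
    calc O * (Oᵀ * Gram η * O) * Oᵀ = (O * Oᵀ) * Gram η * (O * Oᵀ) := by
          simp only [Matrix.mul_assoc]
      _ = Gram η := by rw [hO2, Matrix.one_mul, Matrix.mul_one]
  have hconj_smul : ∀ t : ℝ, Oᵀ * (t • (1 : Matrix (Fin 3) (Fin 3) ℝ)) * O
      = t • (1 : Matrix (Fin 3) (Fin 3) ℝ) := by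
    intro t
    rw [Matrix.mul_smul, Matrix.mul_one, Matrix.smul_mul, hO1]
  refine ⟨?_, ?_, ?_⟩
  · -- MapsTo
    rintro a ⟨hca, hpa⟩
    obtain ⟨t, ht⟩ := (casimir_eq_iff a η).mp hca
    have hga : Gram (sigmaO O a) = Matrix.diagonal d + t • 1 := by
      rw [gram_sigmaO, ht, Matrix.mul_add, Matrix.add_mul, hdiag, hconj_smul]
    rw [mem_Nqr_iff]
    have hentry : ∀ i j, Gram (sigmaO O a) i j
        = Matrix.diagonal d i j + t * (1 : Matrix (Fin 3) (Fin 3) ℝ) i j := by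
      intro i j; rw [hga]; simp
    refine ⟨?_, ?_, ?_, ?_, ?_, ?_⟩
    · rw [hentry]; simp [Matrix.diagonal_apply, Matrix.one_apply]
    · rw [hentry]; simp [Matrix.diagonal_apply, Matrix.one_apply]
    · rw [hentry]; simp [Matrix.diagonal_apply, Matrix.one_apply]
    · rw [hentry, hentry]; simp [Matrix.diagonal_apply, Matrix.one_apply]
    · rw [hentry, hentry]; simp [Matrix.diagonal_apply, Matrix.one_apply]
    · rw [phi_sigmaO]; exact (hP (Phi a)).mp hpa
  · -- InjOn
    intro a _ b _ hab
    have := congrArg (sigmaO Oᵀ) hab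
    rwa [hinv₁, hinv₁] at this
  · -- SurjOn
    rintro b hb
    rw [mem_Nqr_iff] at hb
    obtain ⟨hb1, hb2, hb3, hb4, hb5, hb6⟩ := hb
    refine ⟨sigmaO Oᵀ b, ⟨?_, ?_⟩, hinv₂ b⟩
    · -- casimir equality
      rw [casimir_eq_iff]
      obtain ⟨t, ht⟩ : ∃ t : ℝ, Gram b = Matrix.diagonal d + t • 1 := by
        refine ⟨Gram b 2 2 - d 2, ?_⟩
        ext i j
        simp only [Matrix.add_apply, Matrix.smul_apply, Matrix.one_apply, smul_eq_mul,
          Matrix.diagonal_apply]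
        fin_cases i <;> fin_cases j <;>
          simp_all [gram_symm b 0 1, gram_symm b 1 2, gram_symm b 2 0] <;> linarith
      refine ⟨t, ?_⟩
      rw [gram_sigmaO, Matrix.transpose_transpose, ht, Matrix.mul_add, Matrix.add_mul, hGη]
      congr 1
      rw [Matrix.mul_smul, Matrix.mul_one, Matrix.smul_mul, hO2]
    · -- sign condition
      rw [phi_sigmaO, Matrix.det_transpose, hP]
      have heq : O.det * (O.det * Phi b) = Phi b := by rw [← mul_assoc, hdet2, one_mul]
      rw [heq]; exact hb6

end LeafAux

/-- Every leaf in `{Φ < 0}` is carried onto some normal-form leaf `N_{q,r}` by a special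
orthogonal transformation, and every leaf in `{Φ > 0}` is carried onto some `N_{q,r}` by an
orthogonal transformation of determinant `−1`. -/
theorem leaf_transformed_to_Nqr (η : E3 × E3 × E3) :
    (Phi η < 0 → ∃ q r : ℝ, 0 ≤ q ∧ 0 ≤ r ∧
      ∃ O ∈ Matrix.orthogonalGroup (Fin 3) ℝ, O.det = 1 ∧
        Set.BijOn (sigmaO O) {a : E3 × E3 × E3 | casimir a = casimir η ∧ Phi a < 0}
          (Nqr q r)) ∧
    (0 < Phi η → ∃ q r : ℝ, 0 ≤ q ∧ 0 ≤ r ∧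
      ∃ O' ∈ Matrix.orthogonalGroup (Fin 3) ℝ, O'.det = -1 ∧
        Set.BijOn (sigmaO O') {a : E3 × E3 × E3 | casimir a = casimir η ∧ 0 < Phi a}
          (Nqr q r)) := by
  constructor
  · intro _
    obtain ⟨O, hOmem, hOdet, d, hdiag, hd10, hd21⟩ :=
      LeafAux.exists_diagonalizer (LeafAux.Gram η) (LeafAux.gram_isSymm η) 1 (Or.inl rfl)
    refine ⟨d 0 - d 1, d 1 - d 2, by linarith, by linarith, O, hOmem, hOdet, ?_⟩
    exact LeafAux.bijOn_key η O hOmem d hdiag (fun x => x < 0)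
      (fun x => by rw [hOdet]; simp)
  · intro _
    obtain ⟨O, hOmem, hOdet, d, hdiag, hd10, hd21⟩ :=
      LeafAux.exists_diagonalizer (LeafAux.Gram η) (LeafAux.gram_isSymm η) (-1) (Or.inr rfl)
    refine ⟨d 0 - d 1, d 1 - d 2, by linarith, by linarith, O, hOmem, hOdet, ?_⟩
    exact LeafAux.bijOn_key η O hOmem d hdiag (fun x => 0 < x)
      (fun x => by rw [hOdet]; constructor <;> intro h <;> linarith)

end
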